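/- arXiv:1506.07918 — 5 statements merged into one kernel-verified Lean document; each statement's English description precedes it below -/
import Mathlib

section
/- Let U ⊆ ℂ be a nonempty open set, u : U → ℂ holomorphic, and Ψ : U → M₂(ℂ) a holomorphic matrix-valued function, invertible at every point, satisfying Ψ'(z) = (σ₊ + u(z)·σ₋)·Ψ(z) on U. Then the matrix-valued function Λ₃(z) = Ψ(z)⁻¹·σ₃·Ψ(z) equals the negative of the derivative of Λ₋(z) = Ψ(z)⁻¹·σ₋·Ψ(z); that is, Λ₃(z) = −Λ₋'(z) for every z ∈ U. -/
/-!
Differentiating `Ψ⁻¹ M Ψ` along `Ψ' = A Ψ` gives `Ψ⁻¹ (M A - A M) Ψ`, since `(Ψ⁻¹)' = -Ψ⁻¹ A`.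
For `M = σ₋` and `A = σ₊ + u σ₋` the commutator is `σ₋ σ₊ - σ₊ σ₋ = -σ₃`.
-/

open Matrix

noncomputable def sigmaPlus : Matrix (Fin 2) (Fin 2) ℂ := !![0, 1; 0, 0]
noncomputable def sigmaMinus : Matrix (Fin 2) (Fin 2) ℂ := !![0, 0; 1, 0]
noncomputable def sigma3 : Matrix (Fin 2) (Fin 2) ℂ := !![1, 0; 0, -1]

noncomputable def mderiv (F : ℂ → Matrix (Fin 2) (Fin 2) ℂ) (z : ℂ) :
    Matrix (Fin 2) (Fin 2) ℂ :=
  Matrix.of fun i j => deriv (fun w => F w i j) z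

theorem hasDerivAt_ringInverse_mul_mul {𝕜 R : Type*} [NontriviallyNormedField 𝕜]
    [NormedRing R] [NormedAlgebra 𝕜 R] [CompleteSpace R] {Ψ : 𝕜 → R} {A : R} {z : 𝕜}
    (hΨ : HasDerivAt Ψ (A * Ψ z) z) (hunit : IsUnit (Ψ z)) (M : R) :
    HasDerivAt (fun w => Ring.inverse (Ψ w) * M * Ψ w)
      (Ring.inverse (Ψ z) * (M * A - A * M) * Ψ z) z := by
  obtain ⟨u, hu⟩ := hunit
  have hinv : HasDerivAt (fun w => Ring.inverse (Ψ w)) (-(↑u⁻¹ * A)) z := by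
    have := (hu ▸ hasFDerivAt_ringInverse (𝕜 := 𝕜) u).comp_hasDerivAt z hΨ
    simpa [← hu, mul_assoc, Function.comp_def] using this
  convert (hinv.mul_const M).fun_mul hΨ using 1
  rw [← hu, Ring.inverse_unit]
  noncomm_ring

section

-- Any norm would do for derivatives; the operator norm makes matrices a normed algebra.
open scoped Matrix.Norms.Operator

theorem hasDerivAt_matrix_iff {𝕜 : Type*} [NontriviallyNormedField 𝕜] [CompleteSpace 𝕜]
    {m n : Type*} [Fintype m] [Fintype n] {F : 𝕜 → Matrix m n 𝕜} {F' : Matrix m n 𝕜} {z : 𝕜} :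
    HasDerivAt F F' z ↔ ∀ i j, HasDerivAt (fun w => F w i j) (F' i j) z := by
  let e : Matrix m n 𝕜 ≃L[𝕜] (m → n → 𝕜) :=
    (Matrix.ofLinearEquiv 𝕜).symm.toContinuousLinearEquiv
  refine ⟨fun h i j => ?_, fun h => ?_⟩
  · exact hasDerivAt_pi.1 (hasDerivAt_pi.1 (e.hasFDerivAt.comp_hasDerivAt z h) i) j
  · have he : HasDerivAt (e ∘ F) (e F') z := hasDerivAt_pi.2 fun i => hasDerivAt_pi.2 (h i)
    exact e.symm.hasFDerivAt.comp_hasDerivAt z he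

theorem hasDerivAt_mderiv {F : ℂ → Matrix (Fin 2) (Fin 2) ℂ} {z : ℂ}
    (hF : ∀ i j, DifferentiableAt ℂ (fun w => F w i j) z) : HasDerivAt F (mderiv F z) z :=
  hasDerivAt_matrix_iff.2 fun i j => (hF i j).hasDerivAt

theorem HasDerivAt.mderiv_eq {F : ℂ → Matrix (Fin 2) (Fin 2) ℂ} {F' : Matrix (Fin 2) (Fin 2) ℂ}
    {z : ℂ} (hF : HasDerivAt F F' z) : mderiv F z = F' :=
  Matrix.ext fun i j => (hasDerivAt_matrix_iff.1 hF i j).deriv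

theorem mderiv_inv_mul_mul {Ψ : ℂ → Matrix (Fin 2) (Fin 2) ℂ} {A : Matrix (Fin 2) (Fin 2) ℂ}
    {z : ℂ} (hΨ : ∀ i j, DifferentiableAt ℂ (fun w => Ψ w i j) z)
    (hA : mderiv Ψ z = A * Ψ z) (hdet : IsUnit (Ψ z).det) (M : Matrix (Fin 2) (Fin 2) ℂ) :
    mderiv (fun w => (Ψ w)⁻¹ * M * Ψ w) z = (Ψ z)⁻¹ * (M * A - A * M) * Ψ z := by
  simp only [nonsing_inv_eq_ringInverse]
  exact (hasDerivAt_ringInverse_mul_mul (hA ▸ hasDerivAt_mderiv hΨ)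
    ((isUnit_iff_isUnit_det _).2 hdet) M).mderiv_eq

end

theorem sigmaMinus_mul_sub_mul_sigmaMinus (c : ℂ) :
    sigmaMinus * (sigmaPlus + c • sigmaMinus) - (sigmaPlus + c • sigmaMinus) * sigmaMinus
      = -sigma3 := by
  ext i j
  fin_cases i <;> fin_cases j <;> simp [sigmaMinus, sigmaPlus, sigma3]

theorem lambda3_eq_neg_deriv_lambdaMinus_general
    (U : Set ℂ) (hU : IsOpen U)
    (u : ℂ → ℂ)
    (Ψ : ℂ → Matrix (Fin 2) (Fin 2) ℂ)
    (hΨ : ∀ i j, DifferentiableOn ℂ (fun w => Ψ w i j) U)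
    (hinv : ∀ z ∈ U, IsUnit (Ψ z).det)
    (hODE : ∀ z ∈ U, mderiv Ψ z = (sigmaPlus + u z • sigmaMinus) * Ψ z) :
    ∀ z ∈ U, (Ψ z)⁻¹ * sigma3 * Ψ z
      = - mderiv (fun w => (Ψ w)⁻¹ * sigmaMinus * Ψ w) z := by
  intro z hz
  have hΨz : ∀ i j, DifferentiableAt ℂ (fun w => Ψ w i j) z :=
    fun i j => (hΨ i j).differentiableAt (hU.mem_nhds hz)
  rw [mderiv_inv_mul_mul hΨz (hODE z hz) (hinv z hz), sigmaMinus_mul_sub_mul_sigmaMinus,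
    Matrix.mul_neg, Matrix.neg_mul, neg_neg]

/-- If `Ψ' = (σ₊ + u σ₋) Ψ` on a nonempty open set `U`, with `Ψ` holomorphic and invertible
at every point of `U`, then `Λ₃ = Ψ⁻¹ σ₃ Ψ` equals minus the derivative of
`Λ₋ = Ψ⁻¹ σ₋ Ψ` on `U`. -/
theorem lambda3_eq_neg_deriv_lambdaMinus
    (U : Set ℂ) (hU : IsOpen U) (hne : U.Nonempty)
    (u : ℂ → ℂ) (hu : DifferentiableOn ℂ u U)
    (Ψ : ℂ → Matrix (Fin 2) (Fin 2) ℂ)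
    (hΨ : ∀ i j, DifferentiableOn ℂ (fun w => Ψ w i j) U)
    (hinv : ∀ z ∈ U, IsUnit (Ψ z).det)
    (hODE : ∀ z ∈ U, mderiv Ψ z = (sigmaPlus + u z • sigmaMinus) * Ψ z) :
    ∀ z ∈ U, (Ψ z)⁻¹ * sigma3 * Ψ z
      = - mderiv (fun w => (Ψ w)⁻¹ * sigmaMinus * Ψ w) z :=
  lambda3_eq_neg_deriv_lambdaMinus_general U hU u Ψ hΨ hinv hODE
end

section
/- For all matrices M, N ∈ SL(2,ℂ), one has (1/2)·(tr(M·N) − tr(M·N⁻¹)) = tr(M·σ₊)·tr(N·σ₋) + tr(M·σ₋)·tr(N·σ₊) + (1/2)·tr(M·σ₃)·tr(N·σ₃). -/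
open Matrix

/-!
In dimension two `adj N = tr N • 1 - N` (Cayley–Hamilton), and `adj N = N⁻¹` when `det N = 1`, so
`tr(MN) - tr(MN⁻¹) = 2 tr(MN) - tr M tr N`. In entries this is `2 (M₀₁N₁₀ + M₁₀N₀₁)` plus the
product of the diagonal differences `(M₀₀ - M₁₁)(N₀₀ - N₁₁)`, and `M₀₁, M₁₀, M₀₀ - M₁₁` are the
half-traces `tr(Mσ₋), tr(Mσ₊), tr(Mσ₃)`.
-/

namespace Matrix

variable {R : Type*} [CommRing R]

theorem adjugate_fin_two_eq_trace_smul_one_sub (A : Matrix (Fin 2) (Fin 2) R) :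
    adjugate A = trace A • (1 : Matrix (Fin 2) (Fin 2) R) - A := by
  rw [adjugate_fin_two, trace_fin_two, eta_fin_two A]
  ext i j
  fin_cases i <;> fin_cases j <;> simp

theorem inv_eq_trace_smul_one_sub_of_det_eq_one {A : Matrix (Fin 2) (Fin 2) R} (hA : det A = 1) :
    A⁻¹ = trace A • (1 : Matrix (Fin 2) (Fin 2) R) - A := by
  rw [inv_def, hA, Ring.inverse_one, one_smul, adjugate_fin_two_eq_trace_smul_one_sub]

theorem trace_mul_sub_trace_mul_inv_of_det_eq_one (M : Matrix (Fin 2) (Fin 2) R)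
    {N : Matrix (Fin 2) (Fin 2) R} (hN : det N = 1) :
    trace (M * N) - trace (M * N⁻¹) = 2 * trace (M * N) - trace M * trace N := by
  rw [inv_eq_trace_smul_one_sub_of_det_eq_one hN, mul_sub, mul_smul_comm, mul_one, trace_sub,
    trace_smul, smul_eq_mul]
  ring

theorem two_mul_trace_mul_sub_trace_mul_trace_fin_two (M N : Matrix (Fin 2) (Fin 2) R) :
    2 * trace (M * N) - trace M * trace N
      = 2 * (M 0 1 * N 1 0 + M 1 0 * N 0 1) + (M 0 0 - M 1 1) * (N 0 0 - N 1 1) := by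
  simp only [trace_fin_two, mul_apply, Fin.sum_univ_two]
  ring

end Matrix

theorem trace_mul_sigmaPlus (M : Matrix (Fin 2) (Fin 2) ℂ) : trace (M * sigmaPlus) = M 1 0 := by
  simp [sigmaPlus, trace_fin_two, mul_apply]

theorem trace_mul_sigmaMinus (M : Matrix (Fin 2) (Fin 2) ℂ) : trace (M * sigmaMinus) = M 0 1 := by
  simp [sigmaMinus, trace_fin_two, mul_apply]

theorem trace_mul_sigma3 (M : Matrix (Fin 2) (Fin 2) ℂ) :
    trace (M * sigma3) = M 0 0 - M 1 1 := by
  simp [sigma3, trace_fin_two, mul_apply, sub_eq_add_neg]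

theorem goldman_trace_identity_general
    (M N : Matrix (Fin 2) (Fin 2) ℂ) (hN : N.det = 1) :
    (1 / 2 : ℂ) * (Matrix.trace (M * N) - Matrix.trace (M * N⁻¹))
      = Matrix.trace (M * sigmaPlus) * Matrix.trace (N * sigmaMinus)
        + Matrix.trace (M * sigmaMinus) * Matrix.trace (N * sigmaPlus)
        + (1 / 2 : ℂ) * Matrix.trace (M * sigma3) * Matrix.trace (N * sigma3) := by
  rw [trace_mul_sub_trace_mul_inv_of_det_eq_one M hN,
    two_mul_trace_mul_sub_trace_mul_trace_fin_two, trace_mul_sigmaPlus, trace_mul_sigmaPlus,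
    trace_mul_sigmaMinus, trace_mul_sigmaMinus, trace_mul_sigma3, trace_mul_sigma3]
  ring

/-- For `M, N ∈ SL(2,ℂ)`,
`(1/2)(tr(MN) - tr(MN⁻¹)) = tr(Mσ₊) tr(Nσ₋) + tr(Mσ₋) tr(Nσ₊) + (1/2) tr(Mσ₃) tr(Nσ₃)`. -/
theorem goldman_trace_identity
    (M N : Matrix (Fin 2) (Fin 2) ℂ) (hM : M.det = 1) (hN : N.det = 1) :
    (1 / 2 : ℂ) * (Matrix.trace (M * N) - Matrix.trace (M * N⁻¹))
      = Matrix.trace (M * sigmaPlus) * Matrix.trace (N * sigmaMinus)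
        + Matrix.trace (M * sigmaMinus) * Matrix.trace (N * sigmaPlus)
        + (1 / 2 : ℂ) * Matrix.trace (M * sigma3) * Matrix.trace (N * sigma3) :=
  goldman_trace_identity_general M N hN
end

section
/- Let a ≤ b be real numbers and let u, λ, h : ℝ → ℂ be functions such that u is continuously differentiable, and λ and h are three times continuously differentiable, on an open interval containing [a,b]. Suppose λ satisfies the third-order equation λ'''(t) = 4·u(t)·λ'(t) + 2·u'(t)·λ(t) for all t ∈ [a,b]. Then ∫_a^b λ(t)·((1/2)·h'''(t) − 2·u(t)·h'(t) − u'(t)·h(t)) dt = (1/2)·[ λ(t)·h''(t) − λ'(t)·h'(t) + (λ''(t) − 4·u(t)·λ(t))·h(t) ]_{t=a}^{t=b}. -/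
/-!
The formal adjoint of `L = (1/2)∂³ - 2u∂ - u'` is `-L`, so the Lagrange identity reads
`l·L[h] + L[l]·h = B(l, h)'` with the bilinear concomitant
`B(l, h) = (1/2)(l h'' - l' h' + (l'' - 4u l) h)`.
The third-order equation for `l` says exactly `L[l] = 0`, and the fundamental theorem of calculus
turns the identity into the claimed boundary terms.
-/

open MeasureTheory intervalIntegral

namespace Lenard

variable {𝕜 : Type*} [RCLike 𝕜]

noncomputable def op (u f : ℝ → 𝕜) (t : ℝ) : 𝕜 :=
  (1 / 2) * deriv (deriv (deriv f)) t - 2 * u t * deriv f t - deriv u t * f t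

noncomputable def concomitant (u l h : ℝ → 𝕜) (t : ℝ) : 𝕜 :=
  (1 / 2) * (l t * deriv (deriv h) t - deriv l t * deriv h t
    + (deriv (deriv l) t - 4 * u t * l t) * h t)

variable {U : Set ℝ} {u l h : ℝ → 𝕜}

theorem hasDerivAt_deriv_of_contDiffOn {f : ℝ → 𝕜} {n : WithTop ℕ∞}
    (hf : ContDiffOn ℝ n f U) (hU : IsOpen U) (hn : n ≠ 0) {t : ℝ} (ht : t ∈ U) :
    HasDerivAt f (deriv f t) t :=
  ((hf.contDiffAt (hU.mem_nhds ht)).differentiableAt hn).hasDerivAt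

theorem continuousOn_op {f : ℝ → 𝕜} (hU : IsOpen U) (hu : ContDiffOn ℝ 1 u U)
    (hf : ContDiffOn ℝ 3 f U) : ContinuousOn (op u f) U := by
  have hf₁ : ContDiffOn ℝ 2 (deriv f) U := hf.deriv_of_isOpen hU (by norm_num)
  have hf₂ : ContDiffOn ℝ 1 (deriv (deriv f)) U := hf₁.deriv_of_isOpen hU (by norm_num)
  have hf₃ := hf₂.continuousOn_deriv_of_isOpen hU le_rfl
  have hu₁ := hu.continuousOn_deriv_of_isOpen hU le_rfl
  exact ((continuousOn_const.mul hf₃).sub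
    ((continuousOn_const.mul hu.continuousOn).mul hf₁.continuousOn)).sub
    (hu₁.mul hf.continuousOn)

theorem hasDerivAt_concomitant (hU : IsOpen U) (hu : ContDiffOn ℝ 1 u U)
    (hl : ContDiffOn ℝ 3 l U) (hh : ContDiffOn ℝ 3 h U) {t : ℝ} (ht : t ∈ U) :
    HasDerivAt (concomitant u l h) (l t * op u h t + op u l t * h t) t := by
  have hl₁ : ContDiffOn ℝ 2 (deriv l) U := hl.deriv_of_isOpen hU (by norm_num)
  have hl₂ : ContDiffOn ℝ 1 (deriv (deriv l)) U := hl₁.deriv_of_isOpen hU (by norm_num)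
  have hh₁ : ContDiffOn ℝ 2 (deriv h) U := hh.deriv_of_isOpen hU (by norm_num)
  have hh₂ : ContDiffOn ℝ 1 (deriv (deriv h)) U := hh₁.deriv_of_isOpen hU (by norm_num)
  have Dl := hasDerivAt_deriv_of_contDiffOn hl hU (by simp) ht
  have Dl₁ := hasDerivAt_deriv_of_contDiffOn hl₁ hU (by simp) ht
  have Dl₂ := hasDerivAt_deriv_of_contDiffOn hl₂ hU one_ne_zero ht
  have Dh := hasDerivAt_deriv_of_contDiffOn hh hU (by simp) ht
  have Dh₁ := hasDerivAt_deriv_of_contDiffOn hh₁ hU (by simp) ht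
  have Dh₂ := hasDerivAt_deriv_of_contDiffOn hh₂ hU one_ne_zero ht
  have Du := hasDerivAt_deriv_of_contDiffOn hu hU one_ne_zero ht
  refine ((((Dl.mul Dh₂).sub (Dl₁.mul Dh₁)).add
    ((Dl₂.sub ((Du.const_mul (4 : 𝕜)).mul Dl)).mul Dh)).const_mul (1 / 2 : 𝕜)).congr_deriv ?_
  simp only [op, Pi.sub_apply, Pi.mul_apply]
  ring

theorem integral_lagrange_identity {a b : ℝ} (hU : IsOpen U) (hab : Set.uIcc a b ⊆ U)
    (hu : ContDiffOn ℝ 1 u U) (hl : ContDiffOn ℝ 3 l U) (hh : ContDiffOn ℝ 3 h U) :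
    ∫ t in a..b, l t * op u h t + op u l t * h t
      = concomitant u l h b - concomitant u l h a := by
  refine integral_eq_sub_of_hasDerivAt
    (fun t ht ↦ hasDerivAt_concomitant hU hu hl hh (hab ht)) ?_
  refine ContinuousOn.intervalIntegrable (ContinuousOn.mono ?_ hab)
  exact (hl.continuousOn.mul (continuousOn_op hU hu hh)).add
    ((continuousOn_op hU hu hl).mul hh.continuousOn)

end Lenard

open Lenard in
/-- Integration by parts against the Lenard operator `L = (1/2)∂³ - 2u∂ - u'`:
if `l` satisfies the third-order equation `l''' = 4 u l' + 2 u' l` on `[a,b]`, then for any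
sufficiently smooth `h`,
`∫_a^b l·((1/2)h''' - 2u h' - u' h) = (1/2)[l h'' - l' h' + (l'' - 4u l) h]_a^b`. -/
theorem lenard_integration_by_parts
    (a b c d : ℝ) (hab : a ≤ b) (hca : c < a) (hbd : b < d)
    (u l h : ℝ → ℂ)
    (hu : ContDiffOn ℝ 1 u (Set.Ioo c d))
    (hl : ContDiffOn ℝ 3 l (Set.Ioo c d))
    (hh : ContDiffOn ℝ 3 h (Set.Ioo c d))
    (hode : ∀ t ∈ Set.Icc a b,
      deriv (deriv (deriv l)) t = 4 * u t * deriv l t + 2 * deriv u t * l t) :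
    (∫ t in a..b,
        l t * ((1 / 2) * deriv (deriv (deriv h)) t - 2 * u t * deriv h t
          - deriv u t * h t))
      = (1 / 2) *
        ((l b * deriv (deriv h) b - deriv l b * deriv h b
            + (deriv (deriv l) b - 4 * u b * l b) * h b)
          - (l a * deriv (deriv h) a - deriv l a * deriv h a
            + (deriv (deriv l) a - 4 * u a * l a) * h a)) := by
  have hsub : Set.uIcc a b ⊆ Set.Ioo c d := by
    rw [Set.uIcc_of_le hab]
    exact Set.Icc_subset_Ioo hca hbd
  have hopl : ∀ t ∈ Set.uIcc a b, op u l t = 0 := by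
    intro t ht
    rw [Set.uIcc_of_le hab] at ht
    simp only [op, hode t ht]
    ring
  change ∫ t in a..b, l t * op u h t = _
  calc ∫ t in a..b, l t * op u h t
      = ∫ t in a..b, l t * op u h t + op u l t * h t :=
        integral_congr fun t ht ↦ by simp only [hopl t ht, zero_mul, add_zero]
    _ = concomitant u l h b - concomitant u l h a :=
        integral_lagrange_identity isOpen_Ioo hsub hu hl hh
    _ = _ := by
        simp only [concomitant]
        ring
end

section
/- Let n ≥ 1, let U ⊆ ℂⁿ × ℂⁿ be open with points written x = (A₁,…,A_n, B₁,…,B_n), and let Π : U → M_n(ℂ), with entries Π_{ij}, be continuously ℂ-differentiable. For a ℂ-differentiable function f : U → ℂ define V_i f = ∂f/∂A_i + Σ_{j=1}^n Π_{ij}·∂f/∂B_j. Suppose q₁,…,q_n : U → ℂ are twice continuously ℂ-differentiable functions such that V_i q_k = 0 on U for all i, k, and such that the n×n matrix (∂q_k/∂B_j)_{k,j} is invertible at every point of U. Then V_i Π_{jr} = V_j Π_{ir} on U for all indices i, j, r; equivalently, the vector fields V₁,…,V_n pairwise commute, and Π satisfies the system ∂Π_{kℓ}/∂A_j + Σ_r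 Π_{jr}·∂Π_{kℓ}/∂B_r = ∂Π_{jℓ}/∂A_k + Σ_r Π_{kr}·∂Π_{jℓ}/∂B_r. -/
/-- Partial derivative `∂f/∂A_i` of a function on `ℂⁿ × ℂⁿ`, points being written
`x = (A, B)`. -/
noncomputable def pA {n : ℕ} (f : (Fin n → ℂ) × (Fin n → ℂ) → ℂ) (i : Fin n)
    (x : (Fin n → ℂ) × (Fin n → ℂ)) : ℂ :=
  fderiv ℂ f x (Pi.single i 1, 0)

/-- Partial derivative `∂f/∂B_j` of a function on `ℂⁿ × ℂⁿ`, points being written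
`x = (A, B)`. -/
noncomputable def pB {n : ℕ} (f : (Fin n → ℂ) × (Fin n → ℂ) → ℂ) (j : Fin n)
    (x : (Fin n → ℂ) × (Fin n → ℂ)) : ℂ :=
  fderiv ℂ f x (0, Pi.single j 1)

/-- The vector field `V_i = ∂/∂A_i + Σ_j Π_{ij} ∂/∂B_j` applied to `f`. -/
noncomputable def Vop {n : ℕ} (P : (Fin n → ℂ) × (Fin n → ℂ) → Matrix (Fin n) (Fin n) ℂ)
    (i : Fin n) (f : (Fin n → ℂ) × (Fin n → ℂ) → ℂ)
    (x : (Fin n → ℂ) × (Fin n → ℂ)) : ℂ :=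
  pA f i x + ∑ j, P x i j * pB f j x

/-!
Each `q_k` is annihilated by every `V_i`, hence by every commutator `[V_i, V_j]` (here the
symmetry of second derivatives enters). Since the `A`-components of `V_i` are constant,
`[V_i, V_j] = Σ_s (V_i Π_{js} - V_j Π_{is}) ∂_{B_s}`, so the vector of its coefficients lies in
the kernel of the invertible matrix `(∂q_k/∂B_s)` and therefore vanishes.
-/

section PrymField

open VectorField

variable {n : ℕ} (P : (Fin n → ℂ) × (Fin n → ℂ) → Matrix (Fin n) (Fin n) ℂ)

noncomputable def prymField (i : Fin n) (y : (Fin n → ℂ) × (Fin n → ℂ)) :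
    (Fin n → ℂ) × (Fin n → ℂ) :=
  (Pi.single i 1, 0) + ∑ t, P y i t • ((0 : Fin n → ℂ), (Pi.single t 1 : Fin n → ℂ))

lemma fderiv_apply_sum_smul_inr (f : (Fin n → ℂ) × (Fin n → ℂ) → ℂ)
    (x : (Fin n → ℂ) × (Fin n → ℂ)) (c : Fin n → ℂ) :
    fderiv ℂ f x (∑ t, c t • ((0 : Fin n → ℂ), (Pi.single t 1 : Fin n → ℂ))) =
      ∑ t, c t * pB f t x := by
  simp only [map_sum, map_smul, smul_eq_mul, pB]

lemma Vop_eq_fderiv_apply_prymField (i : Fin n) (f : (Fin n → ℂ) × (Fin n → ℂ) → ℂ)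
    (y : (Fin n → ℂ) × (Fin n → ℂ)) :
    Vop P i f y = fderiv ℂ f y (prymField P i y) := by
  rw [prymField, map_add, fderiv_apply_sum_smul_inr, Vop, pA]

variable {P} {x : (Fin n → ℂ) × (Fin n → ℂ)}

lemma hasFDerivAt_prymField {i : Fin n} (hP : ∀ t, DifferentiableAt ℂ (fun y => P y i t) x) :
    HasFDerivAt (prymField P i)
      (∑ t, (fderiv ℂ (fun y => P y i t) x).smulRight
        ((0 : Fin n → ℂ), (Pi.single t 1 : Fin n → ℂ))) x :=
  (hasFDerivAt_const _ x).add
    (HasFDerivAt.fun_sum fun t _ => (hP t).hasFDerivAt.smul_const _) |>.congr_fderiv (zero_add _)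

lemma lieBracket_prymField {i j : Fin n}
    (hPi : ∀ t, DifferentiableAt ℂ (fun y => P y i t) x)
    (hPj : ∀ t, DifferentiableAt ℂ (fun y => P y j t) x) :
    lieBracket ℂ (prymField P i) (prymField P j) x =
      ∑ t, (Vop P i (fun y => P y j t) x - Vop P j (fun y => P y i t) x) •
        ((0 : Fin n → ℂ), (Pi.single t 1 : Fin n → ℂ)) := by
  simp only [lieBracket, (hasFDerivAt_prymField hPi).fderiv, (hasFDerivAt_prymField hPj).fderiv,
    Vop_eq_fderiv_apply_prymField, sub_smul, Finset.sum_sub_distrib, FunLike.coe_sum,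
    Finset.sum_apply, ContinuousLinearMap.smulRight_apply]

lemma fderiv_apply_lieBracket_prymField_eq_zero {U : Set ((Fin n → ℂ) × (Fin n → ℂ))}
    (hU : IsOpen U) (hx : x ∈ U) {f : (Fin n → ℂ) × (Fin n → ℂ) → ℂ}
    (hf : ContDiffAt ℂ 2 f x) (hVf : ∀ a, ∀ y ∈ U, Vop P a f y = 0) {i j : Fin n}
    (hPi : ∀ t, DifferentiableAt ℂ (fun y => P y i t) x)
    (hPj : ∀ t, DifferentiableAt ℂ (fun y => P y j t) x) :
    fderiv ℂ f x (lieBracket ℂ (prymField P i) (prymField P j) x) = 0 := by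
  have hV_nhds (a : Fin n) :
      (fun y => fderiv ℂ f y (prymField P a y)) =ᶠ[nhds x] fun _ => 0 := by
    filter_upwards [hU.mem_nhds hx] with y hy
    rw [← Vop_eq_fderiv_apply_prymField, hVf a y hy]
  rw [fderiv_apply_lieBracket hf (by simp) (hasFDerivAt_prymField hPj).differentiableAt
    (hasFDerivAt_prymField hPi).differentiableAt, (hV_nhds j).fderiv_eq, (hV_nhds i).fderiv_eq]
  simp

end PrymField

theorem prym_matrix_system_general
    (n : ℕ)
    (U : Set ((Fin n → ℂ) × (Fin n → ℂ))) (hU : IsOpen U)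
    (P : (Fin n → ℂ) × (Fin n → ℂ) → Matrix (Fin n) (Fin n) ℂ)
    (hP : ∀ i j, ContDiffOn ℂ 1 (fun x => P x i j) U)
    (q : Fin n → (Fin n → ℂ) × (Fin n → ℂ) → ℂ)
    (hq : ∀ k, ContDiffOn ℂ 2 (q k) U)
    (hVq : ∀ i k, ∀ x ∈ U, Vop P i (q k) x = 0)
    (hinv : ∀ x ∈ U,
      IsUnit (Matrix.of fun k j => pB (q k) j x : Matrix (Fin n) (Fin n) ℂ).det) :
    ∀ i j r, ∀ x ∈ U,
      Vop P i (fun y => P y j r) x = Vop P j (fun y => P y i r) x := by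
  intro i j r x hx
  have hPx (a t : Fin n) : DifferentiableAt ℂ (fun y => P y a t) x :=
    ((hP a t).contDiffAt (hU.mem_nhds hx)).differentiableAt one_ne_zero
  have hker : (Matrix.of fun k s => pB (q k) s x).mulVec
      (fun s => Vop P i (fun y => P y j s) x - Vop P j (fun y => P y i s) x) = 0 := by
    funext k
    have hk := fderiv_apply_lieBracket_prymField_eq_zero hU hx ((hq k).contDiffAt (hU.mem_nhds hx))
      (fun a => hVq a k) (hPx i) (hPx j)
    rw [lieBracket_prymField (hPx i) (hPx j), fderiv_apply_sum_smul_inr] at hk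
    simpa only [Matrix.mulVec, dotProduct, Matrix.of_apply, Pi.zero_apply, mul_comm] using hk
  exact sub_eq_zero.mp (congrFun (Matrix.eq_zero_of_mulVec_eq_zero (hinv x hx).ne_zero hker) r)

/-- If the vector fields `V_i = ∂_{A_i} + Σ_j Π_{ij} ∂_{B_j}` annihilate functions
`q₁, …, q_n` whose matrix of `B`-partials is everywhere invertible, then
`V_i Π_{jr} = V_j Π_{ir}`; equivalently the `V_i` pairwise commute and `Π` satisfies the
system of PDEs (5.10) of the paper. -/
theorem prym_matrix_system
    (n : ℕ) (hn : 1 ≤ n)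
    (U : Set ((Fin n → ℂ) × (Fin n → ℂ))) (hU : IsOpen U)
    (P : (Fin n → ℂ) × (Fin n → ℂ) → Matrix (Fin n) (Fin n) ℂ)
    (hP : ∀ i j, ContDiffOn ℂ 1 (fun x => P x i j) U)
    (q : Fin n → (Fin n → ℂ) × (Fin n → ℂ) → ℂ)
    (hq : ∀ k, ContDiffOn ℂ 2 (q k) U)
    (hVq : ∀ i k, ∀ x ∈ U, Vop P i (q k) x = 0)
    (hinv : ∀ x ∈ U,
      IsUnit (Matrix.of fun k j => pB (q k) j x : Matrix (Fin n) (Fin n) ℂ).det) :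
    ∀ i j r, ∀ x ∈ U,
      Vop P i (fun y => P y j r) x = Vop P j (fun y => P y i r) x :=
  prym_matrix_system_general n U hU P hP q hq hVq hinv
end

section
/- Let n ≥ 1, let U ⊆ ℂⁿ × ℂⁿ be open with points written x = (A₁,…,A_n, B₁,…,B_n), and let Π : U → M_n(ℂ), with entries Π_{ij}, be a symmetric-matrix-valued function satisfying B_j = Σ_{s=1}^n Π_{js}(x)·A_s at every point x = (A,B) ∈ U and for every j. For a ℂ-differentiable f : U → ℂ define V_i f = ∂f/∂A_i + Σ_{j=1}^n Π_{ij}·∂f/∂B_j, and let F : U → ℂ be the function F(A,B) = Σ_{s=1}^n A_s·B_s. Then the function V_j F is ℂ-differentiable on U and Π_{ij}(x) = (1/2)·V_i(V_j F)(x) for every x ∈ U and all i, j. -/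
/-- The generating function `F(A,B) = Σ_s A_s B_s`. -/
noncomputable def genF {n : ℕ} (x : (Fin n → ℂ) × (Fin n → ℂ)) : ℂ :=
  ∑ s, x.1 s * x.2 s

/-! On `U` the relation `B = Π A` turns `V_j F = B_j + Σ_k Π_{jk} A_k` into `2 B_j`. Since `U` is
open, `V_j F` agrees with the linear function `2 B_j` near every point of `U`, and
`V_i (2 B_j) = 2 Π_{ij}`. -/

section Coordinates

variable {𝕜 E : Type*} [NontriviallyNormedField 𝕜] [NormedAddCommGroup E] [NormedSpace 𝕜 E]
  {ι : Type*}

theorem fderiv_fst_apply (i : ι) (x : (ι → 𝕜) × E) :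
    fderiv 𝕜 (fun y : (ι → 𝕜) × E => y.1 i) x =
      (ContinuousLinearMap.proj i).comp (ContinuousLinearMap.fst 𝕜 _ E) :=
  ((ContinuousLinearMap.proj i).comp (ContinuousLinearMap.fst 𝕜 _ E)).fderiv (x := x)

theorem fderiv_snd_apply (i : ι) (x : E × (ι → 𝕜)) :
    fderiv 𝕜 (fun y : E × (ι → 𝕜) => y.2 i) x =
      (ContinuousLinearMap.proj i).comp (ContinuousLinearMap.snd 𝕜 E _) :=
  ((ContinuousLinearMap.proj i).comp (ContinuousLinearMap.snd 𝕜 E _)).fderiv (x := x)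

end Coordinates

section VectorField

variable {n : ℕ} (P : (Fin n → ℂ) × (Fin n → ℂ) → Matrix (Fin n) (Fin n) ℂ)
  {f g : (Fin n → ℂ) × (Fin n → ℂ) → ℂ} {x : (Fin n → ℂ) × (Fin n → ℂ)}

theorem Vop_congr_of_eventuallyEq (i : Fin n) (h : f =ᶠ[nhds x] g) :
    Vop P i f x = Vop P i g x := by
  simp only [Vop, pA, pB, h.fderiv_eq]

theorem Vop_const_mul (i : Fin n) (c : ℂ) :
    Vop P i (fun y => c * f y) x = c * Vop P i f x := by
  have hderiv : fderiv ℂ (fun y => c * f y) x = c • fderiv ℂ f x :=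
    congrFun (fderiv_const_smul_field (f := f) c) x
  simp only [Vop, pA, pB, hderiv, FunLike.coe_smul, Pi.smul_apply, smul_eq_mul,
    mul_add, Finset.mul_sum]
  ring_nf

theorem Vop_snd_apply (i j : Fin n) : Vop P i (fun y => y.2 j) x = P x i j := by
  simp [Vop, pA, pB, fderiv_snd_apply, Pi.single_apply]

end VectorField

theorem fderiv_genF_apply {n : ℕ} (x v : (Fin n → ℂ) × (Fin n → ℂ)) :
    fderiv ℂ genF x v = ∑ s, (x.1 s * v.2 s + x.2 s * v.1 s) := by
  unfold genF
  rw [fderiv_fun_sum fun s _ => by fun_prop, sum_apply]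
  refine Finset.sum_congr rfl fun s _ => ?_
  rw [fderiv_fun_mul (by fun_prop) (by fun_prop)]
  simp [fderiv_fst_apply, fderiv_snd_apply]

theorem Vop_genF {n : ℕ} (P : (Fin n → ℂ) × (Fin n → ℂ) → Matrix (Fin n) (Fin n) ℂ)
    (j : Fin n) (x : (Fin n → ℂ) × (Fin n → ℂ)) :
    Vop P j genF x = x.2 j + ∑ k, P x j k * x.1 k := by
  simp [Vop, pA, pB, fderiv_genF_apply, Pi.single_apply]

theorem Vop_genF_eq_two_mul_snd {n : ℕ}
    {P : (Fin n → ℂ) × (Fin n → ℂ) → Matrix (Fin n) (Fin n) ℂ} {x : (Fin n → ℂ) × (Fin n → ℂ)}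
    {j : Fin n} (hB : x.2 j = ∑ s, P x j s * x.1 s) :
    Vop P j genF x = 2 * x.2 j := by
  rw [Vop_genF, ← hB]
  ring

theorem prym_matrix_second_lie_derivative_general
    (n : ℕ)
    (U : Set ((Fin n → ℂ) × (Fin n → ℂ))) (hU : IsOpen U)
    (P : (Fin n → ℂ) × (Fin n → ℂ) → Matrix (Fin n) (Fin n) ℂ)
    (hB : ∀ x ∈ U, ∀ j, x.2 j = ∑ s, P x j s * x.1 s) :
    ∀ i j : Fin n,
      DifferentiableOn ℂ (Vop P j (genF (n := n))) U ∧
      ∀ x ∈ U, P x i j = (1 / 2 : ℂ) * Vop P i (Vop P j (genF (n := n))) x := by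
  intro i j
  have hVF : Set.EqOn (Vop P j genF) (fun y => 2 * y.2 j) U :=
    fun y hy => Vop_genF_eq_two_mul_snd (hB y hy j)
  refine ⟨DifferentiableOn.congr (by fun_prop) hVF, fun x hx => ?_⟩
  rw [Vop_congr_of_eventuallyEq P i (hVF.eventuallyEq_of_mem (hU.mem_nhds hx)),
    Vop_const_mul, Vop_snd_apply]
  ring

/-- If the symmetric matrix `Π` satisfies `B_j = Σ_s Π_{js} A_s` on the open set `U`, then
`V_j F` is holomorphic on `U` and the Prym matrix is recovered as the second Lie derivative
`Π_{ij} = (1/2) V_i V_j F` of the generating function `F = Σ_s A_s B_s`. -/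
theorem prym_matrix_second_lie_derivative
    (n : ℕ) (hn : 1 ≤ n)
    (U : Set ((Fin n → ℂ) × (Fin n → ℂ))) (hU : IsOpen U)
    (P : (Fin n → ℂ) × (Fin n → ℂ) → Matrix (Fin n) (Fin n) ℂ)
    (hsym : ∀ x ∈ U, (P x).IsSymm)
    (hB : ∀ x ∈ U, ∀ j, x.2 j = ∑ s, P x j s * x.1 s) :
    ∀ i j : Fin n,
      DifferentiableOn ℂ (Vop P j (genF (n := n))) U ∧
      ∀ x ∈ U, P x i j = (1 / 2 : ℂ) * Vop P i (Vop P j (genF (n := n))) x :=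
  prym_matrix_second_lie_derivative_general n U hU P hB
end
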